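/- arXiv:1402.5884 — 3 statements merged into one kernel-verified Lean document; each statement's English description precedes it below -/
import Mathlib

section
/- Assume S_* ≠ ∅ and that ∇f is uniformly continuous on every bounded subset of H. Then the sequence (x^k)_{k∈ℕ} generated by Algorithm A2 converges strongly (in norm) to x_* = P_{S_*}(x^0), the solution of the problem min_{x∈C} f(x) closest to the initial iterate x^0. -/
/-!
Every cut set `C ∩ H_k` contains `x_*`, because `f x_* ≤ f^lev_k` and `f` lies above its
tangent planes; by induction `x_*` then lies in every `W_k`, since `x^{k+1}` is the projection of
`x^0` onto the convex set `C ∩ W_k ∩ H_k`. Hence `‖x^k - x_*‖² + ‖x^k - x^0‖² ≤ ‖x_* - x^0‖²`,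
while `‖x^k - x^0‖` increases (`x^{k+1} ∈ W_k`), so the steps `x^{k+1} - x^k` vanish.
The cut `x^{k+1} ∈ H_k` then forces `α_k ⟪∇f x^k, x^k - P_C z^k⟫ → 0`; the failure of the Armijo
test at `θ^{j(k)-1}` together with the uniform continuity of `∇f` upgrades this to
`⟪∇f x^k, x^k - P_C z^k⟫ → 0`, whence `f x^k → f x_*`. A weak cluster point `w` of the bounded
sequence is therefore a minimizer with `‖w - x^0‖ ≤ lim ‖x^k - x^0‖ ≤ ‖x_* - x^0‖`, so the
limit equals `‖x_* - x^0‖` and the first inequality gives `x^k → x_*`.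
-/

open Filter Topology Set Uniformity
open scoped RealInnerProductSpace

theorem Convex.dist_apply_lt_of_dist_lt_mul {E F : Type*} [NormedAddCommGroup E]
    [NormedSpace ℝ E] [PseudoMetricSpace F] {s : Set E} (hs : Convex ℝ s) {g : E → F} {η : ℝ}
    (hg : ∀ x ∈ s, ∀ y ∈ s, dist x y < η → dist (g x) (g y) < 1) {c : E} (hc : c ∈ s) (n : ℕ) :
    ∀ y ∈ s, dist c y < (n + 1) * η → dist (g c) (g y) < n + 1 := by
  induction n with
  | zero => simpa using hg c hc
  | succ n ih =>
    intro y hy hcy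
    push_cast at hcy ⊢
    set t : ℝ := (n + 1) / (n + 2)
    have ht1 : t < 1 := (div_lt_one (by positivity)).2 (by linarith)
    have ht : t ∈ Icc (0 : ℝ) 1 := ⟨by positivity, ht1.le⟩
    have ht' : t * (n + 2) = n + 1 := by simp only [t]; field_simp
    have hy' : AffineMap.lineMap c y t ∈ s := hs.lineMap_mem hc hy ht
    have h1 : dist c (AffineMap.lineMap c y t) < (n + 1) * η := by
      rw [dist_left_lineMap, Real.norm_of_nonneg ht.1, ← ht', mul_assoc]
      exact mul_lt_mul_of_pos_left (by linarith) (by positivity)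
    have h2 : dist (AffineMap.lineMap c y t) y < η := by
      rw [dist_lineMap_right, Real.norm_of_nonneg (sub_nonneg.2 ht.2)]
      calc (1 - t) * dist c y < (1 - t) * ((n + 2) * η) :=
            mul_lt_mul_of_pos_left (by linarith) (sub_pos.2 ht1)
        _ = η := by linear_combination (-η) * ht'
    linarith [dist_triangle (g c) (g (AffineMap.lineMap c y t)) (g y), ih _ hy' h1,
      hg _ hy' y hy h2]

theorem UniformContinuousOn.isBounded_image_of_convex {E F : Type*} [NormedAddCommGroup E]
    [NormedSpace ℝ E] [PseudoMetricSpace F] {g : E → F} {s : Set E}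
    (hg : UniformContinuousOn g s) (hs : Convex ℝ s) (hsb : Bornology.IsBounded s) :
    Bornology.IsBounded (g '' s) := by
  rcases s.eq_empty_or_nonempty with rfl | ⟨c, hc⟩
  · simp
  obtain ⟨η, hη, hgη⟩ := Metric.uniformContinuousOn_iff.1 hg 1 one_pos
  obtain ⟨R, hR⟩ := hsb.subset_closedBall c
  obtain ⟨n, hn⟩ := exists_nat_gt (R / η)
  rw [div_lt_iff₀ hη] at hn
  refine Metric.isBounded_ball (x := g c) (r := n + 1) |>.subset ?_
  rintro _ ⟨y, hy, rfl⟩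
  refine Metric.mem_ball'.2 (hs.dist_apply_lt_of_dist_lt_mul hgη hc n y hy ?_)
  nlinarith [Metric.mem_closedBall'.1 (hR hy)]

theorem UniformContinuousOn.tendsto_dist_comp {α β ι : Type*} [PseudoMetricSpace α]
    [PseudoMetricSpace β] {g : α → β} {s : Set α} (hg : UniformContinuousOn g s) {l : Filter ι}
    {a b : ι → α} (ha : ∀ i, a i ∈ s) (hb : ∀ i, b i ∈ s)
    (h : Tendsto (fun i => dist (a i) (b i)) l (𝓝 0)) :
    Tendsto (fun i => dist (g (a i)) (g (b i))) l (𝓝 0) := by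
  have hab : Tendsto (fun i => (a i, b i)) l (𝓤 α ⊓ 𝓟 (s ×ˢ s)) := tendsto_inf.2
    ⟨tendsto_uniformity_iff_dist_tendsto_zero.2 h,
      tendsto_principal.2 (Eventually.of_forall fun i => ⟨ha i, hb i⟩)⟩
  exact tendsto_uniformity_iff_dist_tendsto_zero.1 (Tendsto.comp hg hab)

theorem tendsto_zero_of_tendsto_sq {ι : Type*} {l : Filter ι} {u : ι → ℝ} (hu : ∀ i, 0 ≤ u i)
    (h : Tendsto (fun i => u i ^ 2) l (𝓝 0)) : Tendsto u l (𝓝 0) := by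
  simpa [Real.sqrt_sq (hu _)] using h.sqrt

theorem le_and_le_of_eq_min {m a : ℕ → ℝ} {c : ℝ} (h0 : m 0 = a 0)
    (hsucc : ∀ k, m (k + 1) = min (m k) (a (k + 1))) (hc : ∀ k, c ≤ a k) (k : ℕ) :
    c ≤ m k ∧ m k ≤ a k := by
  induction k with
  | zero => rw [h0]; exact ⟨hc 0, le_rfl⟩
  | succ k ih => rw [hsucc]; exact ⟨le_min ih.1 (hc _), min_le_right _ _⟩

section Hilbert

variable {H : Type*} [NormedAddCommGroup H] [InnerProductSpace ℝ H]

def HasGateauxGradient (f : H → ℝ) (g : H → H) : Prop :=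
  ∀ x d : H, Tendsto (fun t : ℝ => (f (x + t • d) - f x) / t) (𝓝[>] 0) (𝓝 ⟪g x, d⟫)

theorem ConvexOn.add_inner_sub_le {f : H → ℝ} {g : H → H} (hf : ConvexOn ℝ univ f)
    (hg : HasGateauxGradient f g) (a b : H) : f a + ⟪g a, b - a⟫ ≤ f b := by
  have hslope : ∀ t ∈ Ioo (0 : ℝ) 1, (f (a + t • (b - a)) - f a) / t ≤ f b - f a := by
    rintro t ⟨ht0, ht1⟩
    have hconv := hf.2 (mem_univ b) (mem_univ a) ht0.le (sub_nonneg.2 ht1.le) (add_sub_cancel t 1)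
    rw [show t • b + (1 - t) • a = a + t • (b - a) by module, smul_eq_mul, smul_eq_mul] at hconv
    rw [div_le_iff₀ ht0]
    linarith
  have := le_of_tendsto (hg a (b - a)) (eventually_of_mem (Ioo_mem_nhdsGT one_pos) hslope)
  linarith

theorem IsMinOn.inner_sub_nonpos {K : Set H} (hK : Convex ℝ K) {a u : H} (hu : u ∈ K)
    (hmin : IsMinOn (fun y => ‖y - a‖) K u) : ∀ y ∈ K, ⟪y - u, a - u⟫ ≤ 0 := by
  have : Nonempty K := ⟨⟨u, hu⟩⟩
  have hinf : ‖a - u‖ = ⨅ w : K, ‖a - w‖ :=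
    le_antisymm (le_ciInf fun w => by simpa only [norm_sub_rev a] using isMinOn_iff.1 hmin w w.2)
      (ciInf_le (f := fun w : K => ‖a - w‖) ⟨0, by rintro _ ⟨w, rfl⟩; positivity⟩ ⟨u, hu⟩)
  intro y hy
  rw [real_inner_comm]
  exact (norm_eq_iInf_iff_real_inner_le_zero hK hu).1 hinf y hy

theorem convex_setOf_inner_sub_le (b c : H) (r : ℝ) : Convex ℝ {y | ⟪c, y - b⟫ ≤ r} := by
  simpa only [inner_sub_right, sub_le_iff_le_add, ContinuousLinearMap.coe_coe,
    innerSL_apply_apply] using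
    convex_halfSpace_le (innerSL ℝ c).isLinear (r + ⟪c, b⟫)

theorem sq_norm_sub_add_sq_norm_sub_le {a y q : H} (h : ⟪q - y, a - y⟫ ≤ 0) :
    ‖q - y‖ ^ 2 + ‖y - a‖ ^ 2 ≤ ‖q - a‖ ^ 2 := by
  have hinner : ⟪q - y, y - a⟫ = -⟪q - y, a - y⟫ := by rw [← inner_neg_right, neg_sub]
  rw [show q - a = (q - y) + (y - a) by abel, norm_add_sq_real, hinner]
  linarith

theorem norm_sub_le_norm_sub_of_inner_nonpos {a y q : H} (h : ⟪q - y, a - y⟫ ≤ 0) :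
    ‖y - a‖ ≤ ‖q - a‖ :=
  (pow_le_pow_iff_left₀ (norm_nonneg _) (norm_nonneg _) two_ne_zero).1
    (by nlinarith [sq_norm_sub_add_sq_norm_sub_le h, sq_nonneg ‖q - y‖])

theorem tendsto_inner_of_tendsto_toWeakSpace {u : ℕ → H} {w : H}
    (h : Tendsto (fun n => toWeakSpace ℝ H (u n)) atTop (𝓝 (toWeakSpace ℝ H w))) (v : H) :
    Tendsto (fun n => ⟪v, u n⟫) atTop (𝓝 ⟪v, w⟫) :=
  ((WeakBilin.eval_continuous _ (innerSL ℝ v)).tendsto _).comp h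

theorem Convex.mem_of_tendsto_toWeakSpace {C : Set H} (hC : Convex ℝ C) (hCcl : IsClosed C)
    {u : ℕ → H} {w : H} (hu : ∀ n, u n ∈ C)
    (h : Tendsto (fun n => toWeakSpace ℝ H (u n)) atTop (𝓝 (toWeakSpace ℝ H w))) : w ∈ C := by
  have hweak : IsClosed (toWeakSpace ℝ H '' C) := by
    have := hC.toWeakSpace_closure ℝ
    rw [hCcl.closure_eq] at this
    exact this ▸ isClosed_closure
  obtain ⟨c, hc, hcw⟩ :=
    hweak.mem_of_tendsto h (Eventually.of_forall fun n => mem_image_of_mem _ (hu n))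
  exact (toWeakSpace ℝ H).injective hcw ▸ hc

open InnerProductSpace TopologicalSpace in
theorem exists_strictMono_tendsto_toWeakSpace [CompleteSpace H] {u : ℕ → H}
    (hu : Bornology.IsBounded (range u)) :
    ∃ φ : ℕ → ℕ, StrictMono φ ∧ ∃ w : H,
      Tendsto (fun n => toWeakSpace ℝ H (u (φ n))) atTop (𝓝 (toWeakSpace ℝ H w)) := by
  obtain ⟨M, hM⟩ := hu.exists_norm_le
  -- sequential Banach–Alaoglu in the separable closed span `K` of the sequence, read through
  -- the Riesz isomorphism of `K`
  set K := (Submodule.span ℝ (range u)).topologicalClosure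
  have : SeparableSpace K := (countable_range u).isSeparable.span.closure.separableSpace
  have : CompleteSpace K := (Submodule.isClosed_topologicalClosure _).completeSpace_coe
  have huK : ∀ n, u n ∈ K := fun n =>
    Submodule.le_topologicalClosure _ (Submodule.subset_span ⟨n, rfl⟩)
  let ψ : ℕ → WeakDual ℝ K := fun n => WeakDual.toStrongDual.symm (toDual ℝ K ⟨u n, huK n⟩)
  have hψ : ∀ n, ψ n ∈ WeakDual.toStrongDual ⁻¹' Metric.closedBall 0 M := fun n => by
    have : ‖toDual ℝ K ⟨u n, huK n⟩‖ ≤ M := by simpa using hM _ (mem_range_self n)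
    exact mem_closedBall_zero_iff.2 this
  obtain ⟨ψ', -, φ, hφ, hlim⟩ := WeakDual.isSeqCompact_closedBall ℝ K 0 M hψ
  refine ⟨φ, hφ, (toDual ℝ K).symm (WeakDual.toStrongDual ψ'), ?_⟩
  refine (IsInducing.induced fun (x : WeakSpace ℝ H) (ℓ : StrongDual ℝ H) => ℓ x).tendsto_nhds_iff.2
    (tendsto_pi_nhds.2 fun ℓ => ?_)
  set a := (toDual ℝ K).symm (ℓ.comp K.subtypeL)
  have hℓ : ∀ y : K, ℓ y = ⟪a, y⟫ := fun y => by simp [a, toDual_symm_apply]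
  have := ((WeakDual.eval_continuous a).tendsto ψ').comp hlim
  convert this using 2 with i
  · exact (hℓ ⟨u (φ i), huK _⟩).trans (by simp [ψ, real_inner_comm])
  · exact (hℓ _).trans (by rw [real_inner_comm, toDual_symm_apply]; rfl)

theorem le_of_tendsto_of_tendsto_toWeakSpace {f : H → ℝ} {g : H → H}
    (hfg : ∀ a b, f a + ⟪g a, b - a⟫ ≤ f b) {u : ℕ → H} {w : H} {c : ℝ}
    (hw : Tendsto (fun n => toWeakSpace ℝ H (u n)) atTop (𝓝 (toWeakSpace ℝ H w)))
    (hf : Tendsto (fun n => f (u n)) atTop (𝓝 c)) : f w ≤ c := by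
  have hlin : Tendsto (fun n => f w + ⟪g w, u n - w⟫) atTop (𝓝 (f w)) := by
    simpa [inner_sub_right] using
      ((tendsto_inner_of_tendsto_toWeakSpace hw (g w)).sub_const ⟪g w, w⟫).const_add (f w)
  exact le_of_tendsto_of_tendsto' hlin hf fun n => hfg w (u n)

section AnchoredSequence

variable {x : ℕ → H}

theorem inner_sub_nonpos_of_isMinOn_inter {A : ℕ → Set H} {p : H} (hA : ∀ k, Convex ℝ (A k))
    (hpA : ∀ k, p ∈ A k) (hxA : ∀ k, x (k + 1) ∈ A k ∩ {y | ⟪y - x k, x 0 - x k⟫ ≤ 0})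
    (hmin : ∀ k, IsMinOn (fun y => ‖y - x 0‖) (A k ∩ {y | ⟪y - x k, x 0 - x k⟫ ≤ 0}) (x (k + 1)))
    (k : ℕ) : ⟪p - x k, x 0 - x k⟫ ≤ 0 := by
  induction k with
  | zero => simp
  | succ k ih =>
    have hW : Convex ℝ {y | ⟪y - x k, x 0 - x k⟫ ≤ 0} := by
      simpa only [real_inner_comm] using convex_setOf_inner_sub_le (x k) (x 0 - x k) 0
    exact (hmin k).inner_sub_nonpos ((hA k).inter hW) (hxA k) p ⟨hpA k, ih⟩

theorem monotone_norm_sub_of_inner_nonpos (hx : ∀ k, ⟪x (k + 1) - x k, x 0 - x k⟫ ≤ 0) :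
    Monotone fun k => ‖x k - x 0‖ :=
  monotone_nat_of_le_succ fun k => norm_sub_le_norm_sub_of_inner_nonpos (hx k)

theorem tendsto_norm_sub_succ_of_inner_nonpos (hx : ∀ k, ⟪x (k + 1) - x k, x 0 - x k⟫ ≤ 0)
    {R : ℝ} (hR : ∀ k, ‖x k - x 0‖ ≤ R) : Tendsto (fun k => ‖x (k + 1) - x k‖) atTop (𝓝 0) := by
  have hmono := monotone_norm_sub_of_inner_nonpos hx
  have hlim := tendsto_atTop_ciSup hmono ⟨R, forall_mem_range.2 hR⟩
  have hgap : Tendsto (fun k => ‖x (k + 1) - x 0‖ ^ 2 - ‖x k - x 0‖ ^ 2) atTop (𝓝 0) := by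
    simpa using ((hlim.comp (tendsto_add_atTop_nat 1)).pow 2).sub (hlim.pow 2)
  refine tendsto_zero_of_tendsto_sq (fun _ => norm_nonneg _) ?_
  refine squeeze_zero (fun _ => sq_nonneg _) (fun k => ?_) hgap
  linarith [sq_norm_sub_add_sq_norm_sub_le (hx k)]

theorem tendsto_of_inner_nonpos_of_forall_weak_limit [CompleteSpace H] {p : H}
    (hx : ∀ k, ⟪x (k + 1) - x k, x 0 - x k⟫ ≤ 0) (hp : ∀ k, ⟪p - x k, x 0 - x k⟫ ≤ 0)
    (hfar : ∀ (φ : ℕ → ℕ) (w : H), StrictMono φ →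
      Tendsto (fun n => toWeakSpace ℝ H (x (φ n))) atTop (𝓝 (toWeakSpace ℝ H w)) →
        ‖p - x 0‖ ≤ ‖w - x 0‖) :
    Tendsto x atTop (𝓝 p) := by
  have hsq : ∀ k, ‖x k - p‖ ^ 2 + ‖x k - x 0‖ ^ 2 ≤ ‖p - x 0‖ ^ 2 := fun k => by
    simpa only [norm_sub_rev p] using sq_norm_sub_add_sq_norm_sub_le (hp k)
  have hR : ∀ k, ‖x k - x 0‖ ≤ ‖p - x 0‖ := fun k => norm_sub_le_norm_sub_of_inner_nonpos (hp k)
  have hmono := monotone_norm_sub_of_inner_nonpos hx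
  set L := ⨆ k, ‖x k - x 0‖
  have hlim : Tendsto (fun k => ‖x k - x 0‖) atTop (𝓝 L) :=
    tendsto_atTop_ciSup hmono ⟨_, forall_mem_range.2 hR⟩
  obtain ⟨φ, hφ, w, hw⟩ := exists_strictMono_tendsto_toWeakSpace <|
    (Metric.isBounded_closedBall (x := x 0)).subset
      (range_subset_iff.2 fun k => mem_closedBall_iff_norm.2 (hR k))
  have hwL : w ∈ Metric.closedBall (x 0) L :=
    (convex_closedBall _ _).mem_of_tendsto_toWeakSpace Metric.isClosed_closedBall
      (fun n => mem_closedBall_iff_norm.2 (hmono.ge_of_tendsto hlim _)) hw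
  have hL : L = ‖p - x 0‖ :=
    le_antisymm (le_of_tendsto' hlim hR) ((hfar φ w hφ hw).trans (mem_closedBall_iff_norm.1 hwL))
  have hgap := (hlim.pow 2).const_sub (‖p - x 0‖ ^ 2)
  rw [hL, sub_self] at hgap
  rw [tendsto_iff_norm_sub_tendsto_zero]
  refine tendsto_zero_of_tendsto_sq (fun _ => norm_nonneg _) ?_
  exact squeeze_zero (fun _ => sq_nonneg _) (fun k => by linarith [hsq k]) hgap

end AnchoredSequence

section ProjectedGradient

variable {C : Set H} {x v p : H} {β : ℝ}

theorem sq_norm_sub_le_mul_inner (hp : ∀ c ∈ C, ⟪x - β • v - p, c - p⟫ ≤ 0) (hx : x ∈ C) :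
    ‖x - p‖ ^ 2 ≤ β * ⟪v, x - p⟫ := by
  have := hp x hx
  rw [sub_right_comm, inner_sub_left, real_inner_smul_left, real_inner_self_eq_norm_sq] at this
  linarith

theorem norm_sub_le_mul_of_sq_norm_sub_le {G : ℝ} (hβ : 0 ≤ β) (h : ‖x - p‖ ^ 2 ≤ β * ⟪v, x - p⟫)
    (hv : ‖v‖ ≤ G) : ‖x - p‖ ≤ β * G := by
  have hcs := (real_inner_le_norm v (x - p)).trans (mul_le_mul_of_nonneg_right hv (norm_nonneg _))
  have hG : 0 ≤ G := (norm_nonneg v).trans hv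
  nlinarith [norm_nonneg (x - p), mul_nonneg hβ hG, mul_le_mul_of_nonneg_left hcs hβ]

theorem sub_le_inner_add_of_inner_proj_nonpos {f : H → ℝ} {g : H → H}
    (hfg : ∀ a b, f a + ⟪g a, b - a⟫ ≤ f b) {c : H} (hβ : 0 < β)
    (hp : ⟪x - β • g x - p, c - p⟫ ≤ 0) :
    f x - f c ≤ ⟪g x, x - p⟫ + ‖x - p‖ * ‖p - c‖ / β := by
  have hcs : ⟪x - p, p - c⟫ ≤ ‖x - p‖ * ‖p - c‖ := real_inner_le_norm _ _
  have hsplit : ⟪g x, c - x⟫ = -⟪g x, x - p⟫ - ⟪g x, p - c⟫ := by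
    rw [show c - x = -(x - p) - (p - c) by abel, inner_sub_right, inner_neg_right]
  rw [sub_right_comm, inner_sub_left, real_inner_smul_left, ← neg_sub p c, inner_neg_right,
    inner_neg_right] at hp
  have hpc : ⟪g x, p - c⟫ ≤ ‖x - p‖ * ‖p - c‖ / β := by
    rw [le_div_iff₀ hβ]
    linarith
  linarith [hfg x c]

end ProjectedGradient

section Armijo

variable {f : H → ℝ} {g : H → H}

theorem sub_mul_inner_lt_of_not_armijo (hfg : ∀ a b, f a + ⟪g a, b - a⟫ ≤ f b) {x p : H}
    {t δ : ℝ} (ht : 0 < t) (hfail : ¬ f (t • p + (1 - t) • x) ≤ f x - δ * t * ⟪g x, x - p⟫) :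
    (1 - δ) * ⟪g x, x - p⟫ < ‖g x - g (t • p + (1 - t) • x)‖ * ‖x - p‖ := by
  set y := t • p + (1 - t) • x
  have hgrad := hfg y x
  rw [show x - y = t • (x - p) by simp only [y]; module, real_inner_smul_right] at hgrad
  have hy : ⟪g y, x - p⟫ < δ * ⟪g x, x - p⟫ := lt_of_mul_lt_mul_left (by linarith) ht.le
  have hcs : ⟪g x - g y, x - p⟫ ≤ ‖g x - g y‖ * ‖x - p‖ := real_inner_le_norm _ _
  rw [inner_sub_left] at hcs
  linarith

theorem exists_armijo_trial_bound (hfg : ∀ a b, f a + ⟪g a, b - a⟫ ≤ f b) {θ δ : ℝ}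
    (hθ : θ ∈ Ioo (0 : ℝ) 1) (hδ : δ < 1) {x p : H} (hΓ : 0 ≤ ⟪g x, x - p⟫) {j : ℕ}
    (hj : ∀ i < j, ¬ f (θ ^ i • p + (1 - θ ^ i) • x) ≤ f x - δ * θ ^ i * ⟪g x, x - p⟫) :
    ∃ t ∈ Icc (0 : ℝ) 1, θ * t ≤ θ ^ j ∧ (1 - δ) * ⟪g x, x - p⟫ ≤
      (1 - δ) * (θ ^ j * ⟪g x, x - p⟫) + ‖g x - g (t • p + (1 - t) • x)‖ * ‖x - p‖ := by
  cases j with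
  | zero => exact ⟨0, ⟨le_rfl, zero_le_one⟩, by simp, by simp⟩
  | succ m =>
    have hfail := sub_mul_inner_lt_of_not_armijo hfg (pow_pos hθ.1 m) (hj m m.lt_succ_self)
    refine ⟨θ ^ m, ⟨pow_nonneg hθ.1.le m, pow_le_one₀ hθ.1.le hθ.2.le⟩, (pow_succ' θ m).ge, ?_⟩
    have : 0 ≤ (1 - δ) * (θ ^ (m + 1) * ⟪g x, x - p⟫) :=
      mul_nonneg (by linarith) (mul_nonneg (pow_nonneg hθ.1.le _) hΓ)
    linarith

theorem tendsto_zero_of_le_sub_level {x : ℕ → H} {a lev : ℕ → ℝ} {δ G : ℝ} (hδ : 0 < δ)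
    (ha : ∀ k, 0 ≤ a k) (hlev : ∀ k, lev k ≤ f (x k) - δ * a k)
    (hcut : ∀ k, ⟪g (x k), x (k + 1) - x k⟫ + f (x k) - lev k ≤ 0)
    (hG : ∀ k, ‖g (x k)‖ ≤ G) (hx : Tendsto (fun k => ‖x (k + 1) - x k‖) atTop (𝓝 0)) :
    Tendsto a atTop (𝓝 0) := by
  refine squeeze_zero ha (fun k => ?_) (by simpa using (hx.const_mul G).div_const δ)
  have hcs := neg_le_of_abs_le (abs_real_inner_le_norm (g (x k)) (x (k + 1) - x k))
  have := mul_le_mul_of_nonneg_right (hG k) (norm_nonneg (x (k + 1) - x k))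
  rw [le_div_iff₀ hδ]
  linarith [hlev k, hcut k]

theorem tendsto_inner_zero_of_armijo (hfg : ∀ a b, f a + ⟪g a, b - a⟫ ≤ f b) {θ δ c : ℝ}
    (hθ : θ ∈ Ioo (0 : ℝ) 1) (hδ : δ < 1) (hc : 0 < c) {B : Set H} (hB : Convex ℝ B)
    (hBb : Bornology.IsBounded B) (hg : UniformContinuousOn g B) {x p : ℕ → H} {j : ℕ → ℕ}
    (hx : ∀ k, x k ∈ B) (hp : ∀ k, p k ∈ B)
    (hres : ∀ k, ‖x k - p k‖ ^ 2 ≤ c * ⟪g (x k), x k - p k⟫)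
    (hj : ∀ k, ∀ i < j k, ¬ f (θ ^ i • p k + (1 - θ ^ i) • x k) ≤
      f (x k) - δ * θ ^ i * ⟪g (x k), x k - p k⟫)
    (hdec : Tendsto (fun k => θ ^ j k * ⟪g (x k), x k - p k⟫) atTop (𝓝 0)) :
    Tendsto (fun k => ⟪g (x k), x k - p k⟫) atTop (𝓝 0) := by
  have hΓ : ∀ k, 0 ≤ ⟪g (x k), x k - p k⟫ := fun k =>
    (mul_nonneg_iff_of_pos_left hc).1 ((sq_nonneg _).trans (hres k))
  obtain ⟨D, hD⟩ := Metric.isBounded_iff.1 hBb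
  have hθj : ∀ k, 0 ≤ θ ^ j k ∧ θ ^ j k ≤ 1 := fun k =>
    ⟨pow_nonneg hθ.1.le _, pow_le_one₀ hθ.1.le hθ.2.le⟩
  choose t ht hθt hbound using fun k => exists_armijo_trial_bound hfg hθ hδ (hΓ k) (hj k)
  set y := fun k => t k • p k + (1 - t k) • x k
  have hy : ∀ k, y k ∈ B := fun k =>
    hB (hp k) (hx k) (ht k).1 (sub_nonneg.2 (ht k).2) (add_sub_cancel _ _)
  -- `(θ ^ j k * ‖x k - p k‖) ^ 2 ≤ θ ^ j k * ‖x k - p k‖ ^ 2 ≤ c * (θ ^ j k * Γ k)`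
  have hstep : Tendsto (fun k => θ ^ j k * ‖x k - p k‖) atTop (𝓝 0) := by
    refine tendsto_zero_of_tendsto_sq (fun k => mul_nonneg (hθj k).1 (norm_nonneg _)) ?_
    refine squeeze_zero (fun _ => sq_nonneg _) (fun k => ?_) (by simpa using hdec.const_mul c)
    have := mul_le_mul_of_nonneg_left (hres k) (hθj k).1
    have := mul_le_mul_of_nonneg_right (hθj k).2 (mul_nonneg (hθj k).1 (sq_nonneg ‖x k - p k‖))
    nlinarith
  have hxy : Tendsto (fun k => dist (x k) (y k)) atTop (𝓝 0) := by
    refine squeeze_zero (fun _ => dist_nonneg) (fun k => ?_) (by simpa using hstep.div_const θ)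
    rw [dist_eq_norm, show x k - y k = t k • (x k - p k) by simp only [y]; module, norm_smul,
      Real.norm_of_nonneg (ht k).1, le_div_iff₀ hθ.1]
    nlinarith [hθt k, norm_nonneg (x k - p k)]
  have hgxy := hg.tendsto_dist_comp hx hy hxy
  have h1δ : 0 < 1 - δ := by linarith
  have hlin : Tendsto (fun k => (1 - δ) * ⟪g (x k), x k - p k⟫) atTop (𝓝 0) := by
    refine squeeze_zero (g := fun k => (1 - δ) * (θ ^ j k * ⟪g (x k), x k - p k⟫) +
        dist (g (x k)) (g (y k)) * D) (fun k => mul_nonneg h1δ.le (hΓ k))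
      (fun k => (hbound k).trans ?_)
      (by simpa using (hdec.const_mul (1 - δ)).add (hgxy.mul_const D))
    rw [← dist_eq_norm, ← dist_eq_norm]
    gcongr
    exact hD (hx k) (hp k)
  simpa [h1δ.ne'] using hlin.const_mul (1 - δ)⁻¹

theorem tendsto_apply_of_tendsto_residual (hfg : ∀ a b, f a + ⟪g a, b - a⟫ ≤ f b) {βlo D : ℝ}
    (hβlo : 0 < βlo) {β : ℕ → ℝ} (hβ : ∀ k, βlo ≤ β k) {x p : ℕ → H} {xs : H}
    (hp : ∀ k, ⟪x k - β k • g (x k) - p k, xs - p k⟫ ≤ 0) (hD : ∀ k, ‖p k - xs‖ ≤ D)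
    (hxsmin : ∀ k, f xs ≤ f (x k)) (hΓ : Tendsto (fun k => ⟪g (x k), x k - p k⟫) atTop (𝓝 0))
    (hd : Tendsto (fun k => ‖x k - p k‖) atTop (𝓝 0)) :
    Tendsto (fun k => f (x k)) atTop (𝓝 (f xs)) := by
  have hgap : ∀ k, f (x k) - f xs ≤ ⟪g (x k), x k - p k⟫ + ‖x k - p k‖ * D / βlo := fun k => by
    refine (sub_le_inner_add_of_inner_proj_nonpos hfg (hβlo.trans_le (hβ k)) (hp k)).trans ?_
    gcongr
    · exact mul_nonneg (norm_nonneg _) ((norm_nonneg _).trans (hD k))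
    · exact hD k
    · exact hβ k
  rw [← tendsto_sub_nhds_zero_iff]
  exact squeeze_zero (fun k => sub_nonneg.2 (hxsmin k)) hgap
    (by simpa using hΓ.add ((hd.mul_const D).div_const βlo))

theorem tendsto_apply_of_armijo {C : Set H}
    (hfg : ∀ a b, f a + ⟪g a, b - a⟫ ≤ f b)
    (hg : ∀ B : Set H, Bornology.IsBounded B → UniformContinuousOn g B)
    {θ δ βlo βhi : ℝ} (hθ : θ ∈ Ioo (0 : ℝ) 1) (hδ : δ ∈ Ioo (0 : ℝ) 1) (hβlo : 0 < βlo)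
    {β : ℕ → ℝ} (hβ : ∀ k, β k ∈ Icc βlo βhi) {x p : ℕ → H} {j : ℕ → ℕ} {lev : ℕ → ℝ}
    {xs : H} {R : ℝ} (hxC : ∀ k, x k ∈ C) (hR : ∀ k, ‖x k - x 0‖ ≤ R)
    (hp : ∀ k, ∀ c ∈ C, ⟪x k - β k • g (x k) - p k, c - p k⟫ ≤ 0)
    (hj : ∀ k, ∀ i < j k, ¬ f (θ ^ i • p k + (1 - θ ^ i) • x k) ≤
      f (x k) - δ * θ ^ i * ⟪g (x k), x k - p k⟫)
    (hlev : ∀ k, lev k ≤ f (x k) - δ * θ ^ j k * ⟪g (x k), x k - p k⟫)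
    (hcut : ∀ k, ⟪g (x k), x (k + 1) - x k⟫ + f (x k) - lev k ≤ 0)
    (hsucc : Tendsto (fun k => ‖x (k + 1) - x k‖) atTop (𝓝 0))
    (hxs : xs ∈ C) (hxsmin : ∀ k, f xs ≤ f (x k)) :
    Tendsto (fun k => f (x k)) atTop (𝓝 (f xs)) := by
  have hβpos : ∀ k, 0 < β k := fun k => hβlo.trans_le (hβ k).1
  have hβhi : 0 < βhi := hβpos 0 |>.trans_le (hβ 0).2
  have hΓ : ∀ k, 0 ≤ ⟪g (x k), x k - p k⟫ := fun k => (mul_nonneg_iff_of_pos_left (hβpos k)).1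
    ((sq_nonneg _).trans (sq_norm_sub_le_mul_inner (hp k) (hxC k)))
  have hres : ∀ k, ‖x k - p k‖ ^ 2 ≤ βhi * ⟪g (x k), x k - p k⟫ := fun k =>
    (sq_norm_sub_le_mul_inner (hp k) (hxC k)).trans (mul_le_mul_of_nonneg_right (hβ k).2 (hΓ k))
  obtain ⟨G, hG⟩ := ((hg _ Metric.isBounded_closedBall).isBounded_image_of_convex
    (convex_closedBall (x 0) R) Metric.isBounded_closedBall).exists_norm_le
  have hgx : ∀ k, ‖g (x k)‖ ≤ G := fun k => hG _ ⟨x k, mem_closedBall_iff_norm.2 (hR k), rfl⟩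
  have hd : ∀ k, ‖x k - p k‖ ≤ βhi * G := fun k =>
    norm_sub_le_mul_of_sq_norm_sub_le hβhi.le (hres k) (hgx k)
  have hxB : ∀ k, x k ∈ Metric.closedBall (x 0) (R + βhi * G) := fun k =>
    mem_closedBall_iff_norm.2 (by linarith [hR k, (norm_nonneg _).trans (hd k)])
  have hpB : ∀ k, p k ∈ Metric.closedBall (x 0) (R + βhi * G) := fun k =>
    mem_closedBall_iff_norm.2 <| (norm_sub_le_norm_sub_add_norm_sub _ (x k) _).trans
      (by rw [norm_sub_rev]; linarith [hR k, hd k])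
  have hΓlim := tendsto_inner_zero_of_armijo hfg hθ hδ.2 hβhi (convex_closedBall _ _)
    Metric.isBounded_closedBall (hg _ Metric.isBounded_closedBall) hxB hpB hres hj
    (tendsto_zero_of_le_sub_level hδ.1 (fun k => mul_nonneg (pow_nonneg hθ.1.le _) (hΓ k))
      (fun k => (hlev k).trans_eq (by ring)) hcut hgx hsucc)
  have hdlim : Tendsto (fun k => ‖x k - p k‖) atTop (𝓝 0) :=
    tendsto_zero_of_tendsto_sq (fun _ => norm_nonneg _)
      (squeeze_zero (fun _ => sq_nonneg _) hres (by simpa using hΓlim.const_mul βhi))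
  have hpD : ∀ k, ‖p k - xs‖ ≤ R + βhi * G + ‖x 0 - xs‖ := fun k =>
    (norm_sub_le_norm_sub_add_norm_sub _ (x 0) _).trans
      (by linarith [mem_closedBall_iff_norm.1 (hpB k)])
  exact tendsto_apply_of_tendsto_residual hfg hβlo (fun k => (hβ k).1) (fun k => hp k xs hxs) hpD
    hxsmin hΓlim hdlim

end Armijo

end Hilbert

theorem stmt_15_general
    {H : Type*} [NormedAddCommGroup H] [InnerProductSpace ℝ H] [CompleteSpace H]
    (C : Set H) (hCcl : IsClosed C) (hCcv : Convex ℝ C)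
    (f : H → ℝ) (hf : ConvexOn ℝ Set.univ f)
    (gradf : H → H)
    (hgrad : ∀ x d : H,
      Tendsto (fun t : ℝ => (f (x + t • d) - f x) / t) (nhdsWithin 0 (Set.Ioi 0))
        (nhds ⟪gradf x, d⟫))
    (PC : H → H)
    (hPC : ∀ x : H, PC x ∈ C ∧ ∀ z ∈ C, ⟪x - PC x, z - PC x⟫ ≤ 0)
    (θ δ βlo βhi : ℝ)
    (hθ : θ ∈ Set.Ioo (0:ℝ) 1) (hδ : δ ∈ Set.Ioo (0:ℝ) 1)
    (hβlo : 0 < βlo)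
    (β : ℕ → ℝ) (hβk : ∀ k, β k ∈ Set.Icc βlo βhi)
    (x z : ℕ → H) (j : ℕ → ℕ)
    (hx0 : x 0 ∈ C)
    (hz : ∀ k, z k = x k - β k • gradf (x k))
    (hjA : ∀ k, f ((θ ^ j k) • PC (z k) + (1 - θ ^ j k) • x k)
        ≤ f (x k) - δ * θ ^ j k * ⟪gradf (x k), x k - PC (z k)⟫)
    (hjmin : ∀ k, ∀ i < j k, ¬ (f ((θ ^ i) • PC (z k) + (1 - θ ^ i) • x k)
        ≤ f (x k) - δ * θ ^ i * ⟪gradf (x k), x k - PC (z k)⟫))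
    (flev : ℕ → ℝ)
    (hflev0 : flev 0 = f ((θ ^ j 0) • PC (z 0) + (1 - θ ^ j 0) • x 0))
    (hflevS : ∀ k, flev (k+1) =
        min (flev k) (f ((θ ^ j (k+1)) • PC (z (k+1)) + (1 - θ ^ j (k+1)) • x (k+1))))
    (hstep : ∀ k,
      (x (k+1) ∈ C ∧ ⟪x (k+1) - x k, x 0 - x k⟫ ≤ 0 ∧
        ⟪gradf (x k), x (k+1) - x k⟫ + f (x k) - flev k ≤ 0) ∧
      ∀ y : H, y ∈ C → ⟪y - x k, x 0 - x k⟫ ≤ 0 →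
        ⟪gradf (x k), y - x k⟫ + f (x k) - flev k ≤ 0 →
        ‖x (k+1) - x 0‖ ≤ ‖y - x 0‖)
    (hUC : ∀ B : Set H, Bornology.IsBounded B → ∀ ε > 0, ∃ η > 0,
      ∀ a ∈ B, ∀ b ∈ B, ‖a - b‖ < η → ‖gradf a - gradf b‖ < ε)
    (xstar : H) (hxsC : xstar ∈ C) (hxsmin : ∀ y ∈ C, f xstar ≤ f y)
    (hxsproj : ∀ y : H, y ∈ C → (∀ w ∈ C, f y ≤ f w) → ‖xstar - x 0‖ ≤ ‖y - x 0‖)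
    : Tendsto x atTop (nhds xstar) := by
  have hfg : ∀ a b, f a + ⟪gradf a, b - a⟫ ≤ f b := hf.add_inner_sub_le hgrad
  have hxC : ∀ k, x k ∈ C := fun k => k.casesOn hx0 fun k => (hstep k).1.1
  have hlev := le_and_le_of_eq_min hflev0 hflevS fun k => hxsmin _ <| hCcv (hPC (z k)).1 (hxC k)
    (pow_nonneg hθ.1.le _) (sub_nonneg.2 (pow_le_one₀ hθ.1.le hθ.2.le)) (add_sub_cancel _ _)
  have hcut : ∀ k, ⟪gradf (x k), xstar - x k⟫ ≤ flev k - f (x k) := fun k => by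
    linarith [hfg (x k) xstar, (hlev k).1]
  have hcut' : ∀ k, ⟪gradf (x k), x (k + 1) - x k⟫ ≤ flev k - f (x k) := fun k => by
    linarith [(hstep k).1.2.2]
  have hanchor : ∀ k, ⟪xstar - x k, x 0 - x k⟫ ≤ 0 :=
    inner_sub_nonpos_of_isMinOn_inter
      (A := fun k => C ∩ {y | ⟪gradf (x k), y - x k⟫ ≤ flev k - f (x k)})
      (fun k => hCcv.inter (convex_setOf_inner_sub_le _ _ _)) (fun k => ⟨hxsC, hcut k⟩)
      (fun k => ⟨⟨(hstep k).1.1, hcut' k⟩, (hstep k).1.2.1⟩)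
      (fun k => isMinOn_iff.2 fun y ⟨⟨hyC, hyH⟩, hyW⟩ =>
        (hstep k).2 y hyC hyW (by linarith [hyH.out]))
  have hR : ∀ k, ‖x k - x 0‖ ≤ ‖xstar - x 0‖ := fun k =>
    norm_sub_le_norm_sub_of_inner_nonpos (hanchor k)
  have hfx : Tendsto (fun k => f (x k)) atTop (𝓝 (f xstar)) :=
    tendsto_apply_of_armijo (p := fun k => PC (z k)) hfg
      (fun B hB => Metric.uniformContinuousOn_iff.2 (by simpa only [dist_eq_norm] using hUC B hB))
      hθ hδ hβlo hβk hxC hR (fun k c hc => by simpa only [← hz k] using (hPC (z k)).2 c hc)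
      hjmin (fun k => (hlev k).2.trans (hjA k)) (fun k => (hstep k).1.2.2)
      (tendsto_norm_sub_succ_of_inner_nonpos (fun k => (hstep k).1.2.1) hR) hxsC
      (fun k => hxsmin _ (hxC k))
  refine tendsto_of_inner_nonpos_of_forall_weak_limit (fun k => (hstep k).1.2.1) hanchor
    fun φ w hφ hw => hxsproj w (hCcv.mem_of_tendsto_toWeakSpace hCcl (fun n => hxC _) hw) ?_
  have hwmin := le_of_tendsto_of_tendsto_toWeakSpace hfg hw (hfx.comp hφ.tendsto_atTop)
  exact fun y hy => hwmin.trans (hxsmin y hy)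

theorem stmt_15
    {H : Type*} [NormedAddCommGroup H] [InnerProductSpace ℝ H] [CompleteSpace H]
    (C : Set H) (hCne : C.Nonempty) (hCcl : IsClosed C) (hCcv : Convex ℝ C)
    (f : H → ℝ) (hf : ConvexOn ℝ Set.univ f)
    (gradf : H → H)
    (hgrad : ∀ x d : H,
      Tendsto (fun t : ℝ => (f (x + t • d) - f x) / t) (nhdsWithin 0 (Set.Ioi 0))
        (nhds ⟪gradf x, d⟫))
    (PC : H → H)
    (hPC : ∀ x : H, PC x ∈ C ∧ ∀ z ∈ C, ⟪x - PC x, z - PC x⟫ ≤ 0)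
    (θ δ βlo βhi : ℝ)
    (hθ : θ ∈ Set.Ioo (0:ℝ) 1) (hδ : δ ∈ Set.Ioo (0:ℝ) 1)
    (hβlo : 0 < βlo) (hββ : βlo ≤ βhi)
    (β : ℕ → ℝ) (hβk : ∀ k, β k ∈ Set.Icc βlo βhi)
    (x z : ℕ → H) (α : ℕ → ℝ) (j : ℕ → ℕ)
    (hx0 : x 0 ∈ C)
    (hz : ∀ k, z k = x k - β k • gradf (x k))
    (hjA : ∀ k, f ((θ ^ j k) • PC (z k) + (1 - θ ^ j k) • x k)
        ≤ f (x k) - δ * θ ^ j k * ⟪gradf (x k), x k - PC (z k)⟫)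
    (hjmin : ∀ k, ∀ i < j k, ¬ (f ((θ ^ i) • PC (z k) + (1 - θ ^ i) • x k)
        ≤ f (x k) - δ * θ ^ i * ⟪gradf (x k), x k - PC (z k)⟫))
    (hα : ∀ k, α k = θ ^ j k)
    (flev : ℕ → ℝ)
    (hflev0 : flev 0 = f ((θ ^ j 0) • PC (z 0) + (1 - θ ^ j 0) • x 0))
    (hflevS : ∀ k, flev (k+1) =
        min (flev k) (f ((θ ^ j (k+1)) • PC (z (k+1)) + (1 - θ ^ j (k+1)) • x (k+1))))
    (hstep : ∀ k,
      (x (k+1) ∈ C ∧ ⟪x (k+1) - x k, x 0 - x k⟫ ≤ 0 ∧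
        ⟪gradf (x k), x (k+1) - x k⟫ + f (x k) - flev k ≤ 0) ∧
      ∀ y : H, y ∈ C → ⟪y - x k, x 0 - x k⟫ ≤ 0 →
        ⟪gradf (x k), y - x k⟫ + f (x k) - flev k ≤ 0 →
        ‖x (k+1) - x 0‖ ≤ ‖y - x 0‖)
    (hS : ∃ xs ∈ C, ∀ y ∈ C, f xs ≤ f y)
    (hUC : ∀ B : Set H, Bornology.IsBounded B → ∀ ε > 0, ∃ η > 0,
      ∀ a ∈ B, ∀ b ∈ B, ‖a - b‖ < η → ‖gradf a - gradf b‖ < ε)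
    (xstar : H) (hxsC : xstar ∈ C) (hxsmin : ∀ y ∈ C, f xstar ≤ f y)
    (hxsproj : ∀ y : H, y ∈ C → (∀ w ∈ C, f y ≤ f w) → ‖xstar - x 0‖ ≤ ‖y - x 0‖)
    : Tendsto x atTop (nhds xstar) :=
  stmt_15_general C hCcl hCcv f hf gradf hgrad PC hPC θ δ βlo βhi hθ hδ hβlo β hβk x z j hx0 hz hjA
    hjmin flev hflev0 hflevS hstep hUC xstar hxsC hxsmin hxsproj
end

section
/- Assume S_* ≠ ∅ and let f_* = inf_{x∈C} f(x). Then along Algorithm A2, for every k such that x^k ∉ S_*, one has f(x^k) > f^lev_k ≥ f_*. -/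
/-!
If `x^k` is not a minimizer, it is not a fixed point of the projected gradient step: a fixed point
satisfies `⟪∇f(x^k), w - x^k⟫ ≥ 0` on `C`, which by the gradient inequality of a convex function
makes it a minimizer. Away from fixed points the projection inequality gives
`‖x^k - P_C(z^k)‖² ≤ β_k ⟪∇f(x^k), x^k - P_C(z^k)⟫`, so the Armijo test point has value strictly
below `f(x^k)`, and `f^lev_k` is at most that value. The lower bound holds because `f^lev_k` is a
running minimum of values of `f` at points of `C`.
-/

open Filter Set Topology
open scoped RealInnerProductSpace

/-- `m k = min (v 0, …, v k)`. -/
def IsRunningMin {α : Type*} [LinearOrder α] (v m : ℕ → α) : Prop :=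
  m 0 = v 0 ∧ ∀ k, m (k + 1) = min (m k) (v (k + 1))

namespace IsRunningMin

variable {α : Type*} [LinearOrder α] {v m : ℕ → α}

theorem le_self (hm : IsRunningMin v m) : ∀ k, m k ≤ v k
  | 0 => hm.1.le
  | k + 1 => (hm.2 k).trans_le (min_le_right _ _)

theorem le_of_forall_le (hm : IsRunningMin v m) {b : α} (hb : ∀ k, b ≤ v k) : ∀ k, b ≤ m k
  | 0 => hm.1 ▸ hb 0
  | k + 1 => (hm.2 k).symm ▸ le_min (hm.le_of_forall_le hb k) (hb (k + 1))

end IsRunningMin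

theorem ConvexOn.add_le_of_tendsto_slope {E : Type*} [AddCommGroup E] [Module ℝ E]
    {s : Set E} {f : E → ℝ} (hf : ConvexOn ℝ s f) {x w : E} (hx : x ∈ s) (hw : w ∈ s) {D : ℝ}
    (hD : Tendsto (fun t : ℝ => (f (x + t • (w - x)) - f x) / t) (𝓝[>] 0) (𝓝 D)) :
    f x + D ≤ f w := by
  have hslope : ∀ t ∈ Ioo (0 : ℝ) 1, (f (x + t • (w - x)) - f x) / t ≤ f w - f x := by
    intro t ⟨ht0, ht1⟩
    have hcomb : x + t • (w - x) = (1 - t) • x + t • w := by module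
    have hconv := hf.2 hx hw (sub_nonneg.2 ht1.le) ht0.le (sub_add_cancel 1 t)
    rw [smul_eq_mul, smul_eq_mul] at hconv
    rw [hcomb, div_le_iff₀ ht0]
    nlinarith
  have := le_of_tendsto hD (eventually_of_mem (Ioo_mem_nhdsGT one_pos) hslope)
  linarith

section ProjectedGradient

variable {H : Type*} [NormedAddCommGroup H] [InnerProductSpace ℝ H] {C : Set H} {x g p : H}
  {β : ℝ}

theorem ConvexOn.forall_le_of_proj_step_fixed {f : H → ℝ} (hf : ConvexOn ℝ C f) (hx : x ∈ C)
    (hgrad : ∀ d : H,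
      Tendsto (fun t : ℝ => (f (x + t • d) - f x) / t) (𝓝[>] 0) (𝓝 ⟪g, d⟫))
    (hβ : 0 < β) (hfixed : ∀ w ∈ C, ⟪x - β • g - x, w - x⟫ ≤ 0) :
    ∀ w ∈ C, f x ≤ f w := by
  intro w hw
  have hvar : 0 ≤ ⟪g, w - x⟫ := by
    have h := hfixed w hw
    rw [sub_sub_cancel_left, inner_neg_left, real_inner_smul_left] at h
    nlinarith
  have := hf.add_le_of_tendsto_slope hx hw (hgrad (w - x))
  linarith

theorem inner_sub_proj_step_pos (hβ : 0 < β) (hproj : ⟪x - β • g - p, x - p⟫ ≤ 0)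
    (hne : x ≠ p) : 0 < ⟪g, x - p⟫ := by
  have hsq : ‖x - p‖ ^ 2 ≤ β * ⟪g, x - p⟫ := by
    rw [sub_right_comm, inner_sub_left, real_inner_smul_left, real_inner_self_eq_norm_sq] at hproj
    linarith
  have hpos : 0 < ‖x - p‖ ^ 2 := by
    have := norm_pos_iff.2 (sub_ne_zero.2 hne)
    positivity
  exact pos_of_mul_pos_right (hpos.trans_le hsq) hβ.le

end ProjectedGradient

theorem stmt_16_general
    {H : Type*} [NormedAddCommGroup H] [InnerProductSpace ℝ H]
    (C : Set H) (hCcv : Convex ℝ C)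
    (f : H → ℝ) (hf : ConvexOn ℝ Set.univ f)
    (gradf : H → H)
    (hgrad : ∀ x d : H,
      Tendsto (fun t : ℝ => (f (x + t • d) - f x) / t) (nhdsWithin 0 (Set.Ioi 0))
        (nhds ⟪gradf x, d⟫))
    (PC : H → H)
    (hPC : ∀ x : H, PC x ∈ C ∧ ∀ z ∈ C, ⟪x - PC x, z - PC x⟫ ≤ 0)
    (θ δ βlo βhi : ℝ)
    (hθ : θ ∈ Set.Ioo (0:ℝ) 1) (hδ : δ ∈ Set.Ioo (0:ℝ) 1)
    (hβlo : 0 < βlo)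
    (β : ℕ → ℝ) (hβk : ∀ k, β k ∈ Set.Icc βlo βhi)
    (x z : ℕ → H) (j : ℕ → ℕ)
    (hx0 : x 0 ∈ C)
    (hz : ∀ k, z k = x k - β k • gradf (x k))
    (hjA : ∀ k, f ((θ ^ j k) • PC (z k) + (1 - θ ^ j k) • x k)
        ≤ f (x k) - δ * θ ^ j k * ⟪gradf (x k), x k - PC (z k)⟫)
    (flev : ℕ → ℝ)
    (hflev0 : flev 0 = f ((θ ^ j 0) • PC (z 0) + (1 - θ ^ j 0) • x 0))
    (hflevS : ∀ k, flev (k+1) =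
        min (flev k) (f ((θ ^ j (k+1)) • PC (z (k+1)) + (1 - θ ^ j (k+1)) • x (k+1))))
    (hstep : ∀ k,
      (x (k+1) ∈ C ∧ ⟪x (k+1) - x k, x 0 - x k⟫ ≤ 0 ∧
        ⟪gradf (x k), x (k+1) - x k⟫ + f (x k) - flev k ≤ 0) ∧
      ∀ y : H, y ∈ C → ⟪y - x k, x 0 - x k⟫ ≤ 0 →
        ⟪gradf (x k), y - x k⟫ + f (x k) - flev k ≤ 0 →
        ‖x (k+1) - x 0‖ ≤ ‖y - x 0‖)
    (hS : ∃ xs ∈ C, ∀ y ∈ C, f xs ≤ f y)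
    : ∀ k, ¬ (x k ∈ C ∧ ∀ y ∈ C, f (x k) ≤ f y) →
      flev k < f (x k) ∧ sInf (f '' C) ≤ flev k := by
  intro k hk
  obtain ⟨xs, -, hxs⟩ := hS
  have hxC : ∀ i, x i ∈ C
    | 0 => hx0
    | i + 1 => (hstep i).1.1
  have htestC : ∀ i, (θ ^ j i) • PC (z i) + (1 - θ ^ j i) • x i ∈ C := fun i =>
    hCcv (hPC (z i)).1 (hxC i) (pow_nonneg hθ.1.le _)
      (sub_nonneg.2 (pow_le_one₀ hθ.1.le hθ.2.le)) (add_sub_cancel _ _)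
  have hrun : IsRunningMin (fun i => f ((θ ^ j i) • PC (z i) + (1 - θ ^ j i) • x i)) flev :=
    ⟨hflev0, hflevS⟩
  have hbdd : BddBelow (f '' C) := ⟨f xs, forall_mem_image.2 hxs⟩
  refine ⟨?_, hrun.le_of_forall_le (fun i => csInf_le hbdd (mem_image_of_mem f (htestC i))) k⟩
  have hβ : 0 < β k := hβlo.trans_le (hβk k).1
  have hne : x k ≠ PC (z k) := fun heq => hk ⟨hxC k,
    (hf.subset (subset_univ C) hCcv).forall_le_of_proj_step_fixed (hxC k) (hgrad (x k)) hβ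
      fun w hw => by have h := (hPC (z k)).2 w hw; rwa [← heq, hz k] at h⟩
  have hdesc : 0 < ⟪gradf (x k), x k - PC (z k)⟫ :=
    inner_sub_proj_step_pos hβ (by simpa only [hz k] using (hPC (z k)).2 (x k) (hxC k)) hne
  calc flev k ≤ f ((θ ^ j k) • PC (z k) + (1 - θ ^ j k) • x k) := hrun.le_self k
    _ ≤ f (x k) - δ * θ ^ j k * ⟪gradf (x k), x k - PC (z k)⟫ := hjA k
    _ < f (x k) := sub_lt_self _ (mul_pos (mul_pos hδ.1 (pow_pos hθ.1 _)) hdesc)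

theorem stmt_16
    {H : Type*} [NormedAddCommGroup H] [InnerProductSpace ℝ H] [CompleteSpace H]
    (C : Set H) (hCne : C.Nonempty) (hCcl : IsClosed C) (hCcv : Convex ℝ C)
    (f : H → ℝ) (hf : ConvexOn ℝ Set.univ f)
    (gradf : H → H)
    (hgrad : ∀ x d : H,
      Tendsto (fun t : ℝ => (f (x + t • d) - f x) / t) (nhdsWithin 0 (Set.Ioi 0))
        (nhds ⟪gradf x, d⟫))
    (PC : H → H)
    (hPC : ∀ x : H, PC x ∈ C ∧ ∀ z ∈ C, ⟪x - PC x, z - PC x⟫ ≤ 0)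
    (θ δ βlo βhi : ℝ)
    (hθ : θ ∈ Set.Ioo (0:ℝ) 1) (hδ : δ ∈ Set.Ioo (0:ℝ) 1)
    (hβlo : 0 < βlo) (hββ : βlo ≤ βhi)
    (β : ℕ → ℝ) (hβk : ∀ k, β k ∈ Set.Icc βlo βhi)
    (x z : ℕ → H) (α : ℕ → ℝ) (j : ℕ → ℕ)
    (hx0 : x 0 ∈ C)
    (hz : ∀ k, z k = x k - β k • gradf (x k))
    (hjA : ∀ k, f ((θ ^ j k) • PC (z k) + (1 - θ ^ j k) • x k)
        ≤ f (x k) - δ * θ ^ j k * ⟪gradf (x k), x k - PC (z k)⟫)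
    (hjmin : ∀ k, ∀ i < j k, ¬ (f ((θ ^ i) • PC (z k) + (1 - θ ^ i) • x k)
        ≤ f (x k) - δ * θ ^ i * ⟪gradf (x k), x k - PC (z k)⟫))
    (hα : ∀ k, α k = θ ^ j k)
    (flev : ℕ → ℝ)
    (hflev0 : flev 0 = f ((θ ^ j 0) • PC (z 0) + (1 - θ ^ j 0) • x 0))
    (hflevS : ∀ k, flev (k+1) =
        min (flev k) (f ((θ ^ j (k+1)) • PC (z (k+1)) + (1 - θ ^ j (k+1)) • x (k+1))))
    (hstep : ∀ k,
      (x (k+1) ∈ C ∧ ⟪x (k+1) - x k, x 0 - x k⟫ ≤ 0 ∧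
        ⟪gradf (x k), x (k+1) - x k⟫ + f (x k) - flev k ≤ 0) ∧
      ∀ y : H, y ∈ C → ⟪y - x k, x 0 - x k⟫ ≤ 0 →
        ⟪gradf (x k), y - x k⟫ + f (x k) - flev k ≤ 0 →
        ‖x (k+1) - x 0‖ ≤ ‖y - x 0‖)
    (hS : ∃ xs ∈ C, ∀ y ∈ C, f xs ≤ f y)
    : ∀ k, ¬ (x k ∈ C ∧ ∀ y ∈ C, f (x k) ≤ f y) →
      flev k < f (x k) ∧ sInf (f '' C) ≤ flev k :=
  stmt_16_general C hCcv f hf gradf hgrad PC hPC θ δ βlo βhi hθ hδ hβlo β hβk x z j hx0 hz hjA flev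
    hflev0 hflevS hstep hS
end

section
/- Let H be a real Hilbert space and p > 1. The map g : H → H defined by g(x) = ‖x‖^{p−2} x for x ≠ 0 and g(0) = 0 (the Gateaux derivative of x ↦ (1/p)‖x‖^p) is uniformly continuous on every bounded subset of H. -/
/-!
Away from the origin, `x ↦ ‖x‖ ^ (p - 2) • x` is the product of the bounded, uniformly continuous
maps `x ↦ ‖x‖ ^ (p - 2)` (continuity of `t ↦ t ^ (p - 2)` on a compact interval `[r, R]`) and
`x ↦ x`, hence uniformly continuous on bounded sets. Near the origin its norm `‖x‖ ^ (p - 1)` is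
uniformly small because `p > 1`.
-/

open Filter Set Bornology Topology

theorem UniformContinuousOn.prodMk {α β γ : Type*} [UniformSpace α] [UniformSpace β]
    [UniformSpace γ] {f : α → β} {g : α → γ} {s : Set α} (hf : UniformContinuousOn f s)
    (hg : UniformContinuousOn g s) : UniformContinuousOn (fun x ↦ (f x, g x)) s := by
  rw [uniformContinuousOn_iff_restrict] at *
  exact hf.prodMk hg

theorem UniformContinuousOn.smul_of_isBounded {X 𝕜 E : Type*} [UniformSpace X]
    [PseudoMetricSpace 𝕜] [Zero 𝕜] [PseudoMetricSpace E] [Zero E] [SMul 𝕜 E] [IsBoundedSMul 𝕜 E]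
    {f : X → 𝕜} {g : X → E} {s : Set X} (hf : UniformContinuousOn f s)
    (hg : UniformContinuousOn g s) (hfs : IsBounded (f '' s)) (hgs : IsBounded (g '' s)) :
    UniformContinuousOn (fun x ↦ f x • g x) s :=
  (hfs.prod hgs).uniformContinuousOn_smul.comp (hf.prodMk hg)
    fun _ hx ↦ ⟨mem_image_of_mem f hx, mem_image_of_mem g hx⟩

-- Two nearby points are either both close to `0`, where `f` is small, or both away from it.
theorem uniformContinuousOn_of_tendsto_zero {E F : Type*} [SeminormedAddCommGroup E]
    [SeminormedAddCommGroup F] {f : E → F} {s : Set E} (h0 : Tendsto f (𝓝[s] 0) (𝓝 0))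
    (hfar : ∀ r > 0, UniformContinuousOn f (s ∩ {x | r ≤ ‖x‖})) : UniformContinuousOn f s := by
  rw [Metric.uniformContinuousOn_iff]
  intro ε hε
  obtain ⟨r, hr, hsmall⟩ : ∃ r > 0, ∀ x ∈ s, ‖x‖ < r → ‖f x‖ < ε / 2 := by
    simpa [dist_eq_norm] using Metric.tendsto_nhdsWithin_nhds.1 h0 (ε / 2) (half_pos hε)
  obtain ⟨δ, hδ, hclose⟩ :=
    Metric.uniformContinuousOn_iff.1 (hfar (r / 2) (half_pos hr)) ε hε
  refine ⟨min δ (r / 2), lt_min hδ (half_pos hr), fun x hx y hy hxy ↦ ?_⟩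
  by_cases hnear : ‖x‖ < r ∧ ‖y‖ < r
  · calc dist (f x) (f y) ≤ ‖f x‖ + ‖f y‖ := dist_le_norm_add_norm _ _
      _ < ε / 2 + ε / 2 := add_lt_add (hsmall x hx hnear.1) (hsmall y hy hnear.2)
      _ = ε := add_halves ε
  · have hxy' : |‖x‖ - ‖y‖| < r / 2 :=
      (abs_norm_sub_norm_le x y).trans_lt ((dist_eq_norm x y ▸ hxy).trans_le (min_le_right _ _))
    rw [not_and_or, not_lt, not_lt] at hnear
    have hfar_x : r / 2 ≤ ‖x‖ := by rcases abs_lt.1 hxy'; rcases hnear <;> linarith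
    have hfar_y : r / 2 ≤ ‖y‖ := by rcases abs_lt.1 hxy'; rcases hnear <;> linarith
    exact hclose x ⟨hx, hfar_x⟩ y ⟨hy, hfar_y⟩ (hxy.trans_le (min_le_left _ _))

theorem uniformContinuousOn_norm_rpow_smul_of_le_norm {E : Type*} [SeminormedAddCommGroup E]
    [NormedSpace ℝ E] (q : ℝ) {r : ℝ} (hr : 0 < r) (R : ℝ) :
    UniformContinuousOn (fun x : E ↦ ‖x‖ ^ q • x) (Metric.closedBall 0 R ∩ {x | r ≤ ‖x‖}) := by
  set s := Metric.closedBall (0 : E) R ∩ {x | r ≤ ‖x‖}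
  have hnorm : MapsTo norm s (Icc r R) := fun x hx ↦ ⟨hx.2, by simpa using hx.1⟩
  have hcont : ContinuousOn (fun t : ℝ ↦ t ^ q) (Icc r R) := fun t ht ↦
    (Real.continuousAt_rpow_const t q (Or.inl (hr.trans_le ht.1).ne')).continuousWithinAt
  refine UniformContinuousOn.smul_of_isBounded (f := fun x : E ↦ ‖x‖ ^ q) ?_
    uniformContinuous_id.uniformContinuousOn ?_ ?_
  · exact (isCompact_Icc.uniformContinuousOn_of_continuous hcont).comp
      uniformContinuous_norm.uniformContinuousOn hnorm
  · exact (isCompact_Icc.image_of_continuousOn hcont).isBounded.subset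
      (image_comp (· ^ q) norm s ▸ image_mono hnorm.image_subset)
  · simpa using (Metric.isBounded_closedBall (x := (0 : E)) (r := R)).subset inter_subset_left

theorem norm_norm_rpow_smul_self {E : Type*} [SeminormedAddCommGroup E] [NormedSpace ℝ E]
    {q : ℝ} (hq : q + 1 ≠ 0) (x : E) : ‖‖x‖ ^ q • x‖ = ‖x‖ ^ (q + 1) := by
  rw [norm_smul, Real.norm_eq_abs, abs_of_nonneg (Real.rpow_nonneg (norm_nonneg x) q),
    Real.rpow_add_one' (norm_nonneg x) hq]

theorem tendsto_norm_rpow_smul_self_zero {E : Type*} [SeminormedAddCommGroup E]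
    [NormedSpace ℝ E] {q : ℝ} (hq : -1 < q) :
    Tendsto (fun x : E ↦ ‖x‖ ^ q • x) (𝓝 0) (𝓝 0) := by
  rw [tendsto_zero_iff_norm_tendsto_zero]
  simp_rw [norm_norm_rpow_smul_self (by linarith : q + 1 ≠ 0)]
  have hpow := (Real.continuousAt_rpow_const 0 (q + 1) (Or.inr (by linarith))).tendsto
  rw [Real.zero_rpow (by linarith)] at hpow
  exact hpow.comp (continuous_norm.tendsto' (0 : E) 0 norm_zero)

theorem stmt_18
    {H : Type*} [NormedAddCommGroup H] [InnerProductSpace ℝ H]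
    (p : ℝ) (hp : 1 < p) (g : H → H)
    (hg0 : g 0 = 0) (hg : ∀ x : H, x ≠ 0 → g x = ‖x‖ ^ (p - 2) • x) :
    ∀ B : Set H, Bornology.IsBounded B → ∀ ε > 0, ∃ η > 0,
      ∀ x ∈ B, ∀ y ∈ B, ‖x - y‖ < η → ‖g x - g y‖ < ε := by
  intro B hB ε hε
  have hg_eq : g = fun x ↦ ‖x‖ ^ (p - 2) • x := by
    funext x
    rcases eq_or_ne x 0 with rfl | hx
    · simp [hg0]
    · exact hg x hx
  obtain ⟨R, hBR⟩ := hB.subset_closedBall 0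
  have huc : UniformContinuousOn g (Metric.closedBall 0 R) := hg_eq ▸
    uniformContinuousOn_of_tendsto_zero
      ((tendsto_norm_rpow_smul_self_zero (by linarith)).mono_left nhdsWithin_le_nhds)
      fun _ hr ↦ uniformContinuousOn_norm_rpow_smul_of_le_norm _ hr R
  obtain ⟨η, hη, hclose⟩ := Metric.uniformContinuousOn_iff.1 (huc.mono hBR) ε hε
  refine ⟨η, hη, fun x hx y hy hxy ↦ ?_⟩
  simpa [dist_eq_norm] using hclose x hx y hy (by rwa [dist_eq_norm])
end
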